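/- arXiv:1907.02396 — 3 statements merged into one kernel-verified Lean document; each statement's English description precedes it below -/
import Mathlib

section
/- Let G be a finite nilpotent group admitting a coprime automorphism φ. Then no nontrivial element of G_φ is conjugate in G to an element of G_{-φ}. -/
/-!
If `h` is `φ`-fixed and `φ x = x * h`, then `(φ ^ k) x = x * h ^ k`, so `h ^ (orderOf φ) = 1`
and coprimality forces `h = 1`. This settles the case of a central `h`, where conjugating `h`
does not move it. In general, induct on the nilpotency class: `φ` induces a coprime automorphism
of `G ⧸ center G`, so by induction the image of `h` there is trivial, i.e. `h` is central.
-/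

open Subgroup

namespace MulAut

variable {G : Type*} [Group G]

def quotient (N : Subgroup G) [N.Characteristic] : MulAut G →* MulAut (G ⧸ N) where
  toFun φ := QuotientGroup.congr N N φ (characteristic_iff_map_eq.mp ‹_› φ)
  map_one' := by
    ext q
    induction q using QuotientGroup.induction_on
    rfl
  map_mul' _ _ := by
    ext q
    induction q using QuotientGroup.induction_on
    rfl

@[simp]
theorem quotient_apply_mk (N : Subgroup G) [N.Characteristic] (φ : MulAut G) (x : G) :
    quotient N φ (x : G ⧸ N) = (φ x : G ⧸ N) :=
  rfl

/-- `G_φ` meets no conjugate of `G_{-φ} = {x⁻¹ * φ x}` outside `1`. -/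
def FixedDisjointTwisted (φ : MulAut G) : Prop :=
  ∀ h : G, φ h = h → ∀ c x : G, c⁻¹ * h * c = x⁻¹ * φ x → h = 1

theorem pow_apply_eq_mul_pow {φ : MulAut G} {h x : G} (hfix : φ h = h) (hx : φ x = x * h)
    (k : ℕ) : (φ ^ k) x = x * h ^ k := by
  induction k with
  | zero => simp
  | succ k ih => rw [pow_succ', mul_apply, ih, map_mul, hx, map_pow, hfix, pow_succ', mul_assoc]

theorem eq_one_of_fixed_of_inv_mul_apply_eq {φ : MulAut G}
    (hcop : (Nat.card G).Coprime (orderOf φ)) {h x : G} (hfix : φ h = h)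
    (hx : x⁻¹ * φ x = h) : h = 1 := by
  have hpow : h ^ orderOf φ = 1 := by
    have := pow_apply_eq_mul_pow hfix (by rw [← hx, mul_inv_cancel_left]) (orderOf φ)
    rwa [pow_orderOf_eq_one, one_apply, left_eq_mul] at this
  exact orderOf_eq_one_iff.mp <|
    Nat.eq_one_of_dvd_coprimes hcop (orderOf_dvd_natCard h) (orderOf_dvd_of_pow_eq_one hpow)

theorem fixedDisjointTwisted_of_quotient_center {φ : MulAut G}
    (hcop : (Nat.card G).Coprime (orderOf φ))
    (hquot : (quotient (center G) φ).FixedDisjointTwisted) : φ.FixedDisjointTwisted := by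
  intro h hfix c x hconj
  have hcenter : h ∈ center G := by
    rw [← QuotientGroup.eq_one_iff]
    refine hquot h (by rw [quotient_apply_mk, hfix]) c x ?_
    rw [quotient_apply_mk]
    exact congrArg (fun g : G => (g : G ⧸ center G)) hconj
  have hx : x⁻¹ * φ x = h := by
    rw [← hconj, mem_center_iff.mp hcenter c⁻¹, inv_mul_cancel_right]
  exact eq_one_of_fixed_of_inv_mul_apply_eq hcop hfix hx

theorem coprime_card_quotient_center {φ : MulAut G}
    (hcop : (Nat.card G).Coprime (orderOf φ)) :
    (Nat.card (G ⧸ center G)).Coprime (orderOf (quotient (center G) φ)) :=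
  (hcop.coprime_dvd_left (center G).card_quotient_dvd_card).coprime_dvd_right
    (orderOf_map_dvd _ φ)

end MulAut

theorem stmt_4_general {G : Type*} [Group G] [Group.IsNilpotent G] (φ : MulAut G)
    (hcop : (Nat.card G).Coprime (orderOf φ)) :
    ∀ h : G, φ h = h → ∀ c x : G, c⁻¹ * h * c = x⁻¹ * φ x → h = 1 := by
  refine Group.nilpotent_center_quotient_ind (G := G) (P := fun G _ _ => ∀ φ : MulAut G,
    (Nat.card G).Coprime (orderOf φ) → φ.FixedDisjointTwisted) ?_ ?_ φ hcop
  · exact fun G _ _ _ _ h _ _ _ _ => Subsingleton.elim h 1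
  · exact fun G _ _ ih φ hcop => MulAut.fixedDisjointTwisted_of_quotient_center hcop
      (ih (MulAut.quotient (center G) φ) (MulAut.coprime_card_quotient_center hcop))

/-- If `φ` is a coprime automorphism of a finite nilpotent group `G`,
then no nontrivial element of `G_φ` is conjugate in `G` to an element of `G_{-φ}`. -/
theorem stmt_4 {G : Type*} [Group G] [Finite G] [Group.IsNilpotent G] (φ : MulAut G)
    (hcop : (Nat.card G).Coprime (orderOf φ)) :
    ∀ h : G, φ h = h → ∀ c x : G, c⁻¹ * h * c = x⁻¹ * φ x → h = 1 :=
  stmt_4_general φ hcop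
end

section
/- Let K be the field with 5³ = 125 elements, A its additive group, B its multiplicative group, and G = A ⋊ B the natural semidirect product. Let φ be the automorphism of G induced by the Frobenius map x ↦ x⁵ of K (acting on both A and B). Then φ is a coprime automorphism of G of order 3, and G ≠ G_{-φ}·G_φ. -/
noncomputable section

instance : Fact (Nat.Prime 5) := ⟨by norm_num⟩

/-- The field with `5³ = 125` elements. -/
abbrev K : Type := GaloisField 5 3

/-- The homomorphism turning additive automorphisms of `K` into multiplicative
automorphisms of the additive group `A = (K,+)` written multiplicatively. -/
def addAutToMulAut : Multiplicative (AddAut K) →* MulAut (Multiplicative K) where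
  toFun e := AddEquiv.toMultiplicative e
  map_one' := rfl
  map_mul' _ _ := rfl

/-- The action of `B = Kˣ` on `A = (K,+)` by multiplication. -/
def act : Kˣ →* MulAut (Multiplicative K) :=
  addAutToMulAut.comp (DistribMulAction.toAddAut Kˣ K)

/-- The natural semidirect product `G = A ⋊ B`. -/
abbrev GG : Type := Multiplicative K ⋊[act] Kˣ

/-- The Frobenius automorphism `x ↦ x⁵` of `K`. -/
def frob : K ≃+* K := frobeniusEquiv K 5

/-- The automorphism of `G = A ⋊ B` induced by the Frobenius map `x ↦ x⁵` of `K`,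
acting on both `A` and `B`. -/
def Φ : MulAut GG where
  toFun g := ⟨AddEquiv.toMultiplicative frob.toAddEquiv g.left, Units.mapEquiv frob.toMulEquiv g.right⟩
  invFun g := ⟨(AddEquiv.toMultiplicative frob.toAddEquiv).symm g.left,
    (Units.mapEquiv frob.toMulEquiv).symm g.right⟩
  left_inv g := by
    ext
    · exact frob.toAddEquiv.symm_apply_apply g.left
    · exact congrArg Units.val ((Units.mapEquiv frob.toMulEquiv).symm_apply_apply g.right)
  right_inv g := by
    ext
    · exact frob.toAddEquiv.apply_symm_apply g.left
    · exact congrArg Units.val ((Units.mapEquiv frob.toMulEquiv).apply_symm_apply g.right)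
  map_mul' g h := by
    ext
    · show frob (Multiplicative.toAdd g.left + (g.right : K) * Multiplicative.toAdd h.left) =
        frob (Multiplicative.toAdd g.left) +
          frob ((g.right : K)) * frob (Multiplicative.toAdd h.left)
      simp [map_add, map_mul]
    · exact congrArg Units.val (map_mul (Units.mapEquiv frob.toMulEquiv) g.right h.right)

/-! The Lang map `y ↦ y⁻¹ φ(y)` is constant exactly on the right cosets of `G_φ`, so
`|G_{-φ}| · |G_φ| = |G|`; hence if `G = G_{-φ} G_φ`, every element factors uniquely.
In `G = 𝔽₁₂₅ ⋊ 𝔽₁₂₅ˣ`, pick `a` with `a⁵ ≠ a` and `b` with `b⁵ = a⁵ - a`: the Lang images of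
`(a, b)` and `(0, b)` differ by the nontrivial fixed element `(1, 1)`, contradicting uniqueness. -/

namespace MulAut

variable {G : Type*} [Group G] (φ : MulAut G)

/-- `G_φ`. -/
def fixedSubgroup : Subgroup G := (φ : G →* G).eqLocus (MonoidHom.id G)

variable {φ} in
theorem mem_fixedSubgroup {x : G} : x ∈ φ.fixedSubgroup ↔ φ x = x := Iff.rfl

/-- The Lang map, whose range is `G_{-φ}`. -/
def langMap (y : G) : G := y⁻¹ * φ y

theorem langMap_eq_langMap_iff {y z : G} :
    φ.langMap y = φ.langMap z ↔ QuotientGroup.rightRel φ.fixedSubgroup y z := by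
  rw [QuotientGroup.rightRel_apply, mem_fixedSubgroup, map_mul, map_inv, eq_comm,
    ← mul_right_cancel_iff (a := (φ y)⁻¹), ← mul_left_cancel_iff (a := z)]
  simp only [langMap, mul_assoc, mul_inv_cancel, mul_one, mul_inv_cancel_left]

theorem natCard_range_langMap [Finite G] :
    Nat.card (Set.range φ.langMap) = φ.fixedSubgroup.index := by
  let _ := QuotientGroup.rightRel φ.fixedSubgroup
  have hlift : ∀ y z : G, y ≈ z → φ.langMap y = φ.langMap z :=
    fun _ _ => φ.langMap_eq_langMap_iff.2
  have hinj : (Quotient.lift _ hlift).Injective := by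
    rintro ⟨y⟩ ⟨z⟩ h
    exact Quotient.sound (φ.langMap_eq_langMap_iff.1 h)
  rw [← Set.range_quotient_lift hlift, Nat.card_range_of_injective hinj, Subgroup.index,
    Nat.card_congr (QuotientGroup.quotientRightRelEquivQuotientLeftRel _)]

theorem mul_range_langMap_fixedSubgroup_injective [Finite G]
    (H : ∀ x : G, ∃ g h : G, (∃ y : G, y⁻¹ * φ y = g) ∧ φ h = h ∧ x = g * h) :
    Function.Injective fun p : Set.range φ.langMap × φ.fixedSubgroup => p.1.1 * p.2.1 := by
  refine ((Nat.bijective_iff_surjective_and_card _).2 ⟨fun x => ?_, ?_⟩).1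
  · obtain ⟨g, h, ⟨y, rfl⟩, hh, rfl⟩ := H x
    exact ⟨(⟨_, y, rfl⟩, ⟨h, hh⟩), rfl⟩
  · rw [Nat.card_prod, natCard_range_langMap, mul_comm, Subgroup.card_mul_index]

theorem eq_one_of_langMap_eq_langMap_mul [Finite G]
    (H : ∀ x : G, ∃ g h : G, (∃ y : G, y⁻¹ * φ y = g) ∧ φ h = h ∧ x = g * h)
    {y z h : G} (hh : φ h = h) (heq : φ.langMap y = φ.langMap z * h) : h = 1 := by
  have := φ.mul_range_langMap_fixedSubgroup_injective H
    (a₁ := (⟨_, y, rfl⟩, 1)) (a₂ := (⟨_, z, rfl⟩, ⟨h, hh⟩)) (by simpa using heq)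
  exact congr(($this).2.1).symm

end MulAut

theorem natCard_K : Nat.card K = 125 := GaloisField.card 5 3 three_ne_zero

theorem pow_125 (x : K) : x ^ 125 = x := by
  have := Fintype.ofFinite K
  simpa [← Nat.card_eq_fintype_card, natCard_K] using FiniteField.pow_card x

theorem exists_pow_five_ne : ∃ a : K, a ^ 5 ≠ a := by
  have h := FiniteField.orderOf_frobeniusAlgEquivOfAlgebraic (ZMod 5) K
  rw [GaloisField.finrank 5 three_ne_zero] at h
  by_contra! hc
  have : FiniteField.frobeniusAlgEquivOfAlgebraic (ZMod 5) K = 1 :=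
    AlgEquiv.ext fun a => by simpa [ZMod.card] using hc a
  simp [this] at h

@[simp] theorem act_apply (b : Kˣ) (n : Multiplicative K) :
    act b n = .ofAdd ((b : K) * n.toAdd) := rfl

@[simp] theorem act_symm_apply (b : Kˣ) (n : Multiplicative K) :
    (act b).symm n = .ofAdd (((b⁻¹ : Kˣ) : K) * n.toAdd) := rfl

@[simp] theorem Φ_left (g : GG) : (Φ g).left = .ofAdd (g.left.toAdd ^ 5) := rfl

@[simp] theorem Φ_right (g : GG) : ((Φ g).right : K) = (g.right : K) ^ 5 := rfl

instance : Finite GG := .of_equiv _ SemidirectProduct.equivProd.symm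

theorem natCard_GG : Nat.card GG = 125 * 124 := by
  simp [Nat.card_units, natCard_K, Nat.card_congr Multiplicative.toAdd]

theorem Φ_pow_three : Φ ^ 3 = 1 := by
  ext g
  · simp only [pow_three, MulAut.mul_apply, Φ_left, toAdd_ofAdd, ← pow_mul]
    exact pow_125 _
  · simp only [pow_three, MulAut.mul_apply, Φ_right, ← pow_mul]
    exact pow_125 _

theorem orderOf_Φ : orderOf Φ = 3 := by
  have : Fact (Nat.Prime 3) := ⟨Nat.prime_three⟩
  refine orderOf_eq_prime Φ_pow_three fun h => ?_
  obtain ⟨a, ha⟩ := exists_pow_five_ne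
  exact ha congr(($h (SemidirectProduct.inl (.ofAdd a))).left.toAdd)

theorem exists_langMap_eq_langMap_mul_fixed_ne_one :
    ∃ y z h : GG, Φ h = h ∧ h ≠ 1 ∧ Φ.langMap y = Φ.langMap z * h := by
  obtain ⟨a, ha⟩ := exists_pow_five_ne
  have hu : a ^ 5 - a ≠ 0 := sub_ne_zero.2 ha
  set b := Units.mk0 _ (pow_ne_zero 25 hu)
  have hb : (b : K) ^ 5 = a ^ 5 - a := by simp [b, ← pow_mul, pow_125]
  refine ⟨⟨.ofAdd a, b⟩, ⟨1, b⟩, ⟨.ofAdd 1, 1⟩, ?_, ?_, ?_⟩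
  · ext <;> simp
  · simp [SemidirectProduct.ext_iff]
  · ext
    · simp [MulAut.langMap, hb]
      ring
    · simp [MulAut.langMap]

/-- Glauberman's example: for `G = A ⋊ B` with `A = (𝔽₁₂₅, +)`,
`B = 𝔽₁₂₅ˣ`, and `φ` induced by the Frobenius `x ↦ x⁵`, the automorphism `φ` is a
coprime automorphism of order `3`, and `G ≠ G_{-φ}·G_φ`. -/
theorem stmt_5 :
    orderOf Φ = 3 ∧ (Nat.card GG).Coprime (orderOf Φ) ∧
      ¬ (∀ x : GG, ∃ g h : GG, (∃ y : GG, y⁻¹ * Φ y = g) ∧ Φ h = h ∧ x = g * h) := by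
  refine ⟨orderOf_Φ, by rw [orderOf_Φ, natCard_GG]; norm_num, fun H => ?_⟩
  obtain ⟨y, z, h, hfix, hne, heq⟩ := exists_langMap_eq_langMap_mul_fixed_ne_one
  exact hne (Φ.eq_one_of_langMap_eq_langMap_mul H hfix heq)

end
end

section
/- Let G be a finite nilpotent group admitting a coprime automorphism φ with G = [G,φ]. Let S be the set of those elements h ∈ G_φ for which there exist x₁, x₂ ∈ G_{-φ} such that h lies in the minimal φ-invariant subgroup containing x₁ and x₂. Then G_φ = ⟨S⟩. -/
/-!
Coprimality makes `G = G_{-φ} G_φ` a unique factorization, in `G` and in every `φ`-invariant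
subgroup. Uniqueness goes up the upper central series: modulo the centre the fixed discrepancy `f`
vanishes, and a central fixed `f` with `y₁⁻¹ φ y₁ = y₂⁻¹ φ y₂ f` satisfies
`φ (y₁ y₂⁻¹) = y₁ y₂⁻¹ f`, so `f ^ ord φ = 1`. Existence follows by counting, as
`z G_φ ↦ z (φ z)⁻¹` is well defined on left cosets.

As `G` is finite and generated by `G_{-φ}`, a fixed `g` is a product `c₁ ⋯ cₙ` of elements of
`G_{-φ}`. Factor `c₁ c₂ = d h` inside `⟨c₁, c₂⟩^⟨φ⟩` with `d ∈ G_{-φ}` and `h` fixed, so `h ∈ S`.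
Conjugation by `h` preserves `G_{-φ}`, so `g h⁻¹ = d (h c₃ h⁻¹) ⋯ (h cₙ h⁻¹)` is a fixed product of
`n - 1` elements of `G_{-φ}`, and induction applies.
-/

open Subgroup

namespace MulAut

variable {G Q : Type*} [Group G] [Group Q] {m : ℕ}

theorem coe_pow_eq_iterate (φ : MulAut G) (k : ℕ) : ⇑(φ ^ k : MulAut G) = (⇑φ)^[k] := by
  rw [show ⇑(φ ^ k) = ⇑(MulAut.toPerm G (φ ^ k)) from rfl, map_pow, Equiv.Perm.coe_pow]
  rfl

theorem pow_eq_one_of_surjective_semiconj {φ : MulAut G} {ψ : MulAut Q} {π : G → Q}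
    (hπ : Function.Surjective π) (hsc : Function.Semiconj π φ ψ) (hm : φ ^ m = 1) :
    ψ ^ m = 1 := by
  ext q
  obtain ⟨x, rfl⟩ := hπ q
  rw [coe_pow_eq_iterate, ← (hsc.iterate_right m) x, ← coe_pow_eq_iterate, hm]
  rfl

theorem pow_eq_one_of_injective_semiconj {φ : MulAut G} {ψ : MulAut Q} {ι : Q → G}
    (hι : Function.Injective ι) (hsc : Function.Semiconj ι ψ φ) (hm : φ ^ m = 1) :
    ψ ^ m = 1 := by
  ext q
  refine hι ?_
  rw [coe_pow_eq_iterate, (hsc.iterate_right m) q, ← coe_pow_eq_iterate, hm]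
  rfl

def quotientCenter (φ : MulAut G) : MulAut (G ⧸ center G) :=
  QuotientGroup.congr _ _ φ (characteristic_iff_map_eq.mp centerCharacteristic φ)

noncomputable def restrict (φ : MulAut G) (K : Subgroup G) [Finite K] (hK : Set.MapsTo φ K K) :
    MulAut K :=
  MulEquiv.ofBijective
    (MonoidHom.restrict (f := (φ : G →* G)) (M' := K.toSubmonoid) (N' := K.toSubmonoid) hK)
    (Finite.injective_iff_bijective.mp (MonoidHom.restrict_injective hK φ.injective))

end MulAut

section CoprimeAutomorphism

variable {G : Type*} [Group G] {m : ℕ} {φ : MulAut G}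

theorem eq_one_of_mem_center_of_inv_mul_apply_eq_mul (hm : φ ^ m = 1)
    (hcop : (Nat.card G).Coprime m) {f y₁ y₂ : G} (hfc : f ∈ center G) (hf : φ f = f)
    (h : y₁⁻¹ * φ y₁ = y₂⁻¹ * φ y₂ * f) : f = 1 := by
  have hs : φ (y₁ * y₂⁻¹) = y₁ * y₂⁻¹ * f := by
    have hy₁ : φ y₁ = y₁ * (y₂⁻¹ * φ y₂ * f) := by rw [← h]; group
    rw [map_mul, map_inv, hy₁, mul_assoc, mul_assoc, mul_assoc, ← mem_center_iff.mp hfc]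
    group
  have hpow : ∀ k : ℕ, (⇑φ)^[k] (y₁ * y₂⁻¹) = y₁ * y₂⁻¹ * f ^ k := by
    intro k
    induction k with
    | zero => simp
    | succ k ih => rw [Function.iterate_succ_apply', ih, map_mul, hs, map_pow, hf, pow_succ']; group
  have hfm : y₁ * y₂⁻¹ * f ^ m = y₁ * y₂⁻¹ := by rw [← hpow, ← MulAut.coe_pow_eq_iterate, hm]; rfl
  exact hcop.pow_left_bijective.injective ((mul_eq_left.mp hfm).trans (one_pow m).symm)

theorem eq_one_of_inv_mul_apply_eq_mul [Group.IsNilpotent G] (hm : φ ^ m = 1)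
    (hcop : (Nat.card G).Coprime m) {f y₁ y₂ : G} (hf : φ f = f)
    (h : y₁⁻¹ * φ y₁ = y₂⁻¹ * φ y₂ * f) : f = 1 := by
  revert m φ f y₁ y₂
  refine Group.nilpotent_center_quotient_ind (P := fun G _ _ => ∀ {m : ℕ} {φ : MulAut G},
    φ ^ m = 1 → (Nat.card G).Coprime m → ∀ {f y₁ y₂ : G}, φ f = f →
      y₁⁻¹ * φ y₁ = y₂⁻¹ * φ y₂ * f → f = 1) G
    (fun G _ _ _ _ _ _ f _ _ _ _ => Subsingleton.elim f 1) ?_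
  intro G _ _ ih m φ hm hcop f y₁ y₂ hf h
  refine eq_one_of_mem_center_of_inv_mul_apply_eq_mul hm hcop ?_ hf h
  let π := QuotientGroup.mk' (center G)
  have hsc : Function.Semiconj π φ φ.quotientCenter := fun x => rfl
  rw [← QuotientGroup.eq_one_iff]
  refine ih (φ := φ.quotientCenter) (y₁ := π y₁) (y₂ := π y₂)
    (MulAut.pow_eq_one_of_surjective_semiconj (QuotientGroup.mk'_surjective _) hsc hm)
    (hcop.coprime_dvd_left (card_quotient_dvd_card _)) (congrArg π hf) ?_
  have hπ := congrArg π h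
  simp only [map_mul, map_inv, hsc y₁, hsc y₂] at hπ
  exact hπ

theorem mul_inv_apply_eq_mul_inv_apply_iff (z₁ z₂ : G) :
    z₁ * (φ z₁)⁻¹ = z₂ * (φ z₂)⁻¹ ↔ φ (z₁⁻¹ * z₂) = z₁⁻¹ * z₂ := by
  rw [map_mul, map_inv]
  constructor <;> intro h
  · calc (φ z₁)⁻¹ * φ z₂ = z₁⁻¹ * (z₁ * (φ z₁)⁻¹) * φ z₂ := by group
      _ = z₁⁻¹ * z₂ := by rw [h]; group
  · calc z₁ * (φ z₁)⁻¹ = z₁ * ((φ z₁)⁻¹ * φ z₂) * (φ z₂)⁻¹ := by group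
      _ = z₂ * (φ z₂)⁻¹ := by rw [h]; group

theorem exists_inv_mul_apply_mul_eq [Finite G] [Group.IsNilpotent G] (hm : φ ^ m = 1)
    (hcop : (Nat.card G).Coprime m) (g : G) :
    ∃ y h : G, φ h = h ∧ y⁻¹ * φ y * h = g := by
  let H := (φ : G →* G).eqLocus (MonoidHom.id G)
  let F : (G ⧸ H) × H → G := fun p => p.1.liftOn' (fun z => z * (φ z)⁻¹)
    (fun z₁ z₂ hz => (mul_inv_apply_eq_mul_inv_apply_iff z₁ z₂).mpr
      (QuotientGroup.leftRel_apply.mp hz)) * p.2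
  have hF : Function.Injective F := by
    rintro ⟨q₁, h₁⟩ ⟨q₂, h₂⟩ hq
    induction q₁ using QuotientGroup.induction_on with | H z₁ =>
    induction q₂ using QuotientGroup.induction_on with | H z₂ =>
    change z₁ * (φ z₁)⁻¹ * h₁ = z₂ * (φ z₂)⁻¹ * h₂ at hq
    have hh : (h₂ : G) * (h₁ : G)⁻¹ = 1 := by
      refine eq_one_of_inv_mul_apply_eq_mul (y₁ := z₁⁻¹) (y₂ := z₂⁻¹) hm hcop
        (H.mul_mem h₂.2 (H.inv_mem h₁.2)) ?_
      rw [map_inv, map_inv, inv_inv, inv_inv, ← mul_assoc, ← hq]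
      group
    obtain rfl : h₂ = h₁ := Subtype.ext (mul_inv_eq_one.mp hh)
    have hz := (mul_inv_apply_eq_mul_inv_apply_iff z₁ z₂).mp (mul_right_cancel hq)
    exact Prod.ext (QuotientGroup.eq.mpr hz) rfl
  have hcard : Nat.card ((G ⧸ H) × H) = Nat.card G := by
    rw [Nat.card_prod, ← card_eq_card_quotient_mul_card_subgroup]
  obtain ⟨⟨q, h⟩, hq⟩ := ((Nat.bijective_iff_injective_and_card F).mpr ⟨hF, hcard⟩).surjective g
  induction q using QuotientGroup.induction_on with | H z =>
  exact ⟨z⁻¹, h, h.2, by rw [← hq, map_inv, inv_inv]; rfl⟩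

theorem exists_inv_mul_apply_mul_eq_of_mapsTo [Finite G] [Group.IsNilpotent G] (hm : φ ^ m = 1)
    (hcop : (Nat.card G).Coprime m) {K : Subgroup G} (hK : Set.MapsTo φ K K) {g : G} (hg : g ∈ K) :
    ∃ y ∈ K, ∃ h ∈ K, φ h = h ∧ y⁻¹ * φ y * h = g := by
  have hmK : φ.restrict K hK ^ m = 1 :=
    MulAut.pow_eq_one_of_injective_semiconj Subtype.val_injective (fun _ => rfl) hm
  obtain ⟨y, h, hh, hyh⟩ :=
    exists_inv_mul_apply_mul_eq hmK (hcop.coprime_dvd_left (card_subgroup_dvd_card K)) ⟨g, hg⟩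
  exact ⟨y, y.2, h, h.2, congrArg Subtype.val hh, congrArg Subtype.val hyh⟩

end CoprimeAutomorphism

section Generation

variable {G : Type*} [Group G] (φ : MulAut G)

/-- The set `G_{-φ}`. -/
def twistedCommutators : Set G :=
  Set.range fun y => y⁻¹ * φ y

def invariantClosurePair (a b : G) : Subgroup G :=
  ⨅ (K : Subgroup G) (_ : a ∈ K) (_ : b ∈ K) (_ : ∀ z ∈ K, φ z ∈ K), K

def fixedPointsOfPairClosures : Set G :=
  {h | φ h = h ∧ ∃ x₁ x₂ : G, x₁ ∈ twistedCommutators φ ∧ x₂ ∈ twistedCommutators φ ∧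
    h ∈ invariantClosurePair φ x₁ x₂}

variable {φ}

theorem left_mem_invariantClosurePair (a b : G) : a ∈ invariantClosurePair φ a b := by
  simp only [invariantClosurePair, mem_iInf]
  exact fun _ ha _ _ => ha

theorem right_mem_invariantClosurePair (a b : G) : b ∈ invariantClosurePair φ a b := by
  simp only [invariantClosurePair, mem_iInf]
  exact fun _ _ hb _ => hb

theorem mapsTo_invariantClosurePair (a b : G) :
    Set.MapsTo φ (invariantClosurePair φ a b) (invariantClosurePair φ a b) := by
  intro z hz
  simp only [SetLike.mem_coe, invariantClosurePair, mem_iInf] at hz ⊢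
  exact fun K ha hb hK => hK z (hz K ha hb hK)

theorem conj_mem_twistedCommutators {h x : G} (hh : φ h = h) (hx : x ∈ twistedCommutators φ) :
    MulAut.conj h x ∈ twistedCommutators φ := by
  obtain ⟨y, rfl⟩ := hx
  exact ⟨y * h⁻¹, by simp only [MulAut.conj_apply, map_mul, map_inv, hh]; group⟩

theorem list_prod_mem_closure_fixedPointsOfPairClosures [Finite G] [Group.IsNilpotent G] {m : ℕ}
    (hm : φ ^ m = 1) (hcop : (Nat.card G).Coprime m) :
    ∀ l : List G, (∀ x ∈ l, x ∈ twistedCommutators φ) → φ l.prod = l.prod →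
      l.prod ∈ closure (fixedPointsOfPairClosures φ)
  | [], _, _ => one_mem _
  | [a], hl, hfix => by
    have ha := hl a (by simp)
    simp only [List.prod_cons, List.prod_nil, mul_one] at hfix ⊢
    exact subset_closure ⟨hfix, a, a, ha, ha, left_mem_invariantClosurePair a a⟩
  | a :: b :: t, hl, hfix => by
    obtain ⟨y, -, h, hK, hh, hyh⟩ := exists_inv_mul_apply_mul_eq_of_mapsTo hm hcop
      (mapsTo_invariantClosurePair a b)
      (mul_mem (left_mem_invariantClosurePair a b) (right_mem_invariantClosurePair a b))
    have hS : h ∈ fixedPointsOfPairClosures φ := ⟨hh, a, b, hl a (by simp), hl b (by simp), hK⟩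
    have hprod : (y⁻¹ * φ y :: t.map (MulAut.conj h)).prod = (a :: b :: t).prod * h⁻¹ := by
      simp only [List.prod_cons, ← map_list_prod, MulAut.conj_apply]
      rw [← mul_assoc a, ← hyh]
      group
    have hrec := list_prod_mem_closure_fixedPointsOfPairClosures hm hcop
      (y⁻¹ * φ y :: t.map (MulAut.conj h))
      (by
        simp only [List.mem_cons, List.mem_map]
        rintro x (rfl | ⟨c, hc, rfl⟩)
        exacts [⟨y, rfl⟩, conj_mem_twistedCommutators hh (hl c (by simp [hc]))])
      (by rw [hprod, map_mul, map_inv, hh, hfix])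
    rw [hprod] at hrec
    simpa using mul_mem hrec (subset_closure hS)
termination_by l => l.length

end Generation

/-- Let `G` be a finite nilpotent group with a coprime automorphism `φ` and
`G = [G,φ]`. Let `S` be the set of `h ∈ G_φ` lying in the minimal `φ`-invariant subgroup
containing two elements `x₁, x₂ ∈ G_{-φ}`. Then `G_φ = ⟨S⟩`. -/
theorem stmt_8 {G : Type*} [Group G] [Finite G] [Group.IsNilpotent G] (φ : MulAut G)
    (hcop : (Nat.card G).Coprime (orderOf φ))
    (hgen : Subgroup.closure (Set.range fun x : G => x⁻¹ * φ x) = ⊤) :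
    (Subgroup.closure {h : G | φ h = h ∧ ∃ x₁ x₂ : G,
        (∃ y : G, y⁻¹ * φ y = x₁) ∧ (∃ y : G, y⁻¹ * φ y = x₂) ∧
        h ∈ ⨅ (K : Subgroup G) (_ : x₁ ∈ K) (_ : x₂ ∈ K) (_ : ∀ z ∈ K, φ z ∈ K), K} : Set G)
      = {x : G | φ x = x} := by
  change (closure (fixedPointsOfPairClosures φ) : Set G) = (φ : G →* G).eqLocus (MonoidHom.id G)
  refine le_antisymm ((closure_le _).mpr fun h hh => hh.1) fun g hg => ?_
  have hg' : g ∈ Submonoid.closure (twistedCommutators φ) := by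
    rw [← closure_toSubmonoid_of_finite, twistedCommutators, hgen]
    trivial
  obtain ⟨l, hl, rfl⟩ := Submonoid.exists_list_of_mem_closure hg'
  exact list_prod_mem_closure_fixedPointsOfPairClosures (pow_orderOf_eq_one φ) hcop l hl hg
end
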